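/- arXiv:gr-qc/0308066 — 3 statements merged into one kernel-verified Lean document; each statement's English description precedes it below -/
import Mathlib

section
/- If a₁, ..., aₙ, c are n+1 real numbers (n ≥ 2) such that (∑ᵢ aᵢ)² = (n-1)(∑ᵢ aᵢ² + c), then 2a₁a₂ ≥ c. -/
/-!
Merging `a₁` and `a₂` into the single entry `a₁ + a₂` leaves the sum unchanged and turns the
sum of squares into `∑ aᵢ² + 2 a₁ a₂`. Cauchy–Schwarz for the resulting `n - 1` numbers gives
`(∑ aᵢ)² ≤ (n - 1)(∑ aᵢ² + 2 a₁ a₂)`; comparing with the hypothesis and cancelling `n - 1 > 0`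
yields `c ≤ 2 a₁ a₂`.
-/

open Finset

theorem sq_sum_le_card_sub_one_mul_sum_sq_add_two_mul {ι : Type*} [DecidableEq ι]
    (s : Finset ι) (a : ι → ℝ) {i j : ι} (hi : i ∈ s) (hj : j ∈ s) (hij : i ≠ j) :
    (∑ k ∈ s, a k) ^ 2 ≤ (#s - 1 : ℝ) * (∑ k ∈ s, a k ^ 2 + 2 * a i * a j) := by
  set t := s.erase j
  have hit : i ∈ t := mem_erase.2 ⟨hij, hi⟩
  set f : ι → ℝ := a + Pi.single i (a j)
  have hf : ∀ k ∈ t.erase i, f k = a k := fun k hk => by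
    simp [f, ne_of_mem_erase hk]
  have hsum : ∑ k ∈ t, f k = ∑ k ∈ s, a k := by
    rw [← add_sum_erase t f hit, sum_congr rfl hf, ← sum_erase_add s a hj, ← add_sum_erase t a hit]
    simp only [f, Pi.add_apply, Pi.single_eq_same]
    ring
  have hsq : ∑ k ∈ t, f k ^ 2 = ∑ k ∈ s, a k ^ 2 + 2 * a i * a j := by
    rw [← add_sum_erase t _ hit, sum_congr rfl fun k hk => by rw [hf k hk],
      ← sum_erase_add s _ hj, ← add_sum_erase t (fun k => a k ^ 2) hit]
    simp only [f, Pi.add_apply, Pi.single_eq_same]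
    ring
  calc (∑ k ∈ s, a k) ^ 2 = (∑ k ∈ t, f k) ^ 2 := by rw [hsum]
    _ ≤ #t * ∑ k ∈ t, f k ^ 2 := sq_sum_le_card_mul_sum_sq
    _ = (#s - 1 : ℝ) * (∑ k ∈ s, a k ^ 2 + 2 * a i * a j) := by
      rw [hsq, cast_card_erase_of_mem hj]

/-- Chen's algebraic lemma (inequality part): if `a₁, …, aₙ, c` are `n+1` real
numbers (`n ≥ 2`) with `(∑ᵢ aᵢ)² = (n-1)(∑ᵢ aᵢ² + c)`, then `2 a₁ a₂ ≥ c`. -/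
theorem chen_lemma_ineq (n : ℕ) (hn : 2 ≤ n) (a : Fin n → ℝ) (c : ℝ)
    (h : (∑ i, a i) ^ 2 = (n - 1 : ℝ) * ((∑ i, (a i) ^ 2) + c)) :
    2 * a ⟨0, by omega⟩ * a ⟨1, by omega⟩ ≥ c := by
  have hpos : (0 : ℝ) < n - 1 := by
    have : (2 : ℝ) ≤ n := by exact_mod_cast hn
    linarith
  have hcs := sq_sum_le_card_sub_one_mul_sum_sq_add_two_mul univ a
    (mem_univ (⟨0, by omega⟩ : Fin n)) (mem_univ (⟨1, by omega⟩ : Fin n)) (by simp)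
  rw [card_univ, Fintype.card_fin, h] at hcs
  linarith [le_of_mul_le_mul_left hcs hpos]
end

section
/- With Ricci tensor eigenvalues (relative to the orthonormal frame) ρ_u = -εμ², ρ_q = εν(2μ-ν), ρ_v = ελ(2μ-λ), ρ_w = ε(μ-λ-ν)(μ+λ+ν), the perfect-fluid condition ρ_q = ρ_v = ρ_w holds if and only if (μ,ν,λ) satisfies one of: (A) μ = 3λ, ν = λ; (B) μ = -λ, ν = λ; (C) μ = -ν, λ = -3ν; (D) μ = -λ, ν = -3λ. -/
/-- Classification of the perfect-fluid cases in Case (iii): the spatial Ricci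
eigenvalues `ν(2μ-ν)`, `λ(2μ-λ)` and `(μ-λ-ν)(μ+λ+ν)` are all equal if and only if
`(μ,ν,λ)` belongs to one of the four families
(A) `μ = 3λ, ν = λ`; (B) `μ = -λ, ν = λ`; (C) `μ = -ν, λ = -3ν`; (D) `μ = -λ, ν = -3λ`. -/
theorem perfect_fluid_classification (μ lam ν : ℝ) :
    (ν * (2 * μ - ν) = lam * (2 * μ - lam) ∧
      lam * (2 * μ - lam) = (μ - lam - ν) * (μ + lam + ν)) ↔
    ((μ = 3 * lam ∧ ν = lam) ∨ (μ = -lam ∧ ν = lam) ∨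
      (μ = -ν ∧ lam = -3 * ν) ∨ (μ = -lam ∧ ν = -3 * lam)) := by
  constructor
  · rintro ⟨h1, h2⟩
    have f1 : (ν - lam) * (2 * μ - ν - lam) = 0 := by nlinarith [h1]
    rcases mul_eq_zero.mp f1 with hv | hm
    · have hv : ν = lam := by linarith
      subst hv
      have f2 : (μ - 3 * ν) * (μ + ν) = 0 := by nlinarith [h2]
      rcases mul_eq_zero.mp f2 with h | h
      · exact Or.inl ⟨by linarith, rfl⟩
      · exact Or.inr (Or.inl ⟨by linarith, rfl⟩)
    · have hm : 2 * μ = ν + lam := by linarith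
      have f2 : (3 * lam + ν) * (lam + 3 * ν) = 0 := by nlinarith [h2, hm]
      rcases mul_eq_zero.mp f2 with h | h
      · exact Or.inr (Or.inr (Or.inr ⟨by linarith, by linarith⟩))
      · exact Or.inr (Or.inr (Or.inl ⟨by linarith, by linarith⟩))
  · rintro (⟨h1, h2⟩ | ⟨h1, h2⟩ | ⟨h1, h2⟩ | ⟨h1, h2⟩) <;> subst h1 <;> subst h2 <;>
      constructor <;> ring
end

section
/- Suppose smooth real functions λ on ℝ (λ nowhere zero) satisfy: (∂_w log λ)² = 4(∂_u log λ)², ∂_u ∂_w log λ = (3/2)(∂_u log λ)(∂_w log λ), and 2 ∂_u ∂_u log λ - 3(∂_u log λ)² - 4ελ² = 0 with ε = ±1. Then λ ≡ 0, a contradiction; hence no nowhere-zero solution exists. -/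
/-- Case (iii), subcase `μ = -λ`, `ν = λ ≠ 0`: there is no smooth nowhere-zero
function `λ` on `ℝ²` (coordinate directions `u = (1,0)` and `w = (0,1)`) satisfying
`(∂_w log λ)² = 4 (∂_u log λ)²`,
`∂_u ∂_w log λ = (3/2)(∂_u log λ)(∂_w log λ)`, and
`2 ∂_u ∂_u log λ - 3 (∂_u log λ)² - 4 ε λ² = 0` with `ε = ±1`
(here `∂ log λ` is written as `∂λ / λ`). -/
theorem no_nowhere_zero_solution (ε : ℝ) (hε : ε = 1 ∨ ε = -1)
    (lam : ℝ × ℝ → ℝ) (hsmooth : ContDiff ℝ (⊤ : ℕ∞) lam) (hne : ∀ p, lam p ≠ 0)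
    (h1 : ∀ p : ℝ × ℝ,
      (fderiv ℝ lam p (0, 1) / lam p) ^ 2 = 4 * (fderiv ℝ lam p (1, 0) / lam p) ^ 2)
    (h2 : ∀ p : ℝ × ℝ,
      fderiv ℝ (fun q => fderiv ℝ lam q (0, 1) / lam q) p (1, 0) =
        (3 / 2) * (fderiv ℝ lam p (1, 0) / lam p) * (fderiv ℝ lam p (0, 1) / lam p))
    (h3 : ∀ p : ℝ × ℝ,
      2 * fderiv ℝ (fun q => fderiv ℝ lam q (1, 0) / lam q) p (1, 0)
        - 3 * (fderiv ℝ lam p (1, 0) / lam p) ^ 2 - 4 * ε * (lam p) ^ 2 = 0) :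
    False := by
  set a : ℝ × ℝ → ℝ := fun q => fderiv ℝ lam q (1, 0) / lam q with ha_def
  set b : ℝ × ℝ → ℝ := fun q => fderiv ℝ lam q (0, 1) / lam q with hb_def
  have hεne : ε ≠ 0 := by rcases hε with h | h <;> simp [h]
  have hnum : ∀ v : ℝ × ℝ, ContDiff ℝ (⊤ : ℕ∞) (fun q => fderiv ℝ lam q v) := fun v =>
    (hsmooth.fderiv_right (by simp)).clm_apply contDiff_const
  have ha : ContDiff ℝ (⊤ : ℕ∞) a := (hnum (1, 0)).div hsmooth hne
  have hb : ContDiff ℝ (⊤ : ℕ∞) b := (hnum (0, 1)).div hsmooth hne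
  -- Step 1: differentiating h1 along u shows a ≡ 0.
  have key : ∀ p : ℝ × ℝ, a p = 0 := by
    intro p
    have hbd : HasFDerivAt b (fderiv ℝ b p) p := (hb.differentiable (by simp) p).hasFDerivAt
    have had : HasFDerivAt a (fderiv ℝ a p) p := (ha.differentiable (by simp) p).hasFDerivAt
    have hF : HasFDerivAt (fun x => b x * b x)
        (b p • fderiv ℝ b p + b p • fderiv ℝ b p) p := hbd.mul hbd
    have hG : HasFDerivAt (fun x => 4 * (a x * a x))
        ((4 : ℝ) • (a p • fderiv ℝ a p + a p • fderiv ℝ a p)) p :=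
      (had.mul had).const_smul (4 : ℝ)
    have hEq : (fun x => b x * b x) = fun x => 4 * (a x * a x) := by
      funext x
      have := h1 x
      simpa [ha_def, hb_def, pow_two] using this
    have hclm : (b p • fderiv ℝ b p + b p • fderiv ℝ b p)
        = ((4 : ℝ) • (a p • fderiv ℝ a p + a p • fderiv ℝ a p)) := by
      rw [← hF.fderiv, ← hG.fderiv, hEq]
    have hderiv_eq := DFunLike.congr_fun hclm ((1 : ℝ), (0 : ℝ))
    simp only [ContinuousLinearMap.add_apply, ContinuousLinearMap.coe_smul',
      Pi.smul_apply, smul_eq_mul] at hderiv_eq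
    have hDb : fderiv ℝ b p (1, 0) = (3 / 2) * a p * b p := h2 p
    have hDa : 2 * fderiv ℝ a p (1, 0) - 3 * a p ^ 2 - 4 * ε * lam p ^ 2 = 0 := h3 p
    have hb2 : b p ^ 2 = 4 * a p ^ 2 := h1 p
    have hfin : 16 * ε * a p * lam p ^ 2 = 0 := by
      linear_combination (-1 : ℝ) * hderiv_eq + (2 * b p) * hDb
        + (-4 * a p) * hDa + (3 * a p) * hb2
    have hlp : lam p ^ 2 ≠ 0 := pow_ne_zero 2 (hne p)
    have hprod : a p * lam p ^ 2 = 0 := by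
      rcases hε with h | h <;> rw [h] at hfin <;> linarith
    rcases mul_eq_zero.mp hprod with h | h
    · exact h
    · exact absurd h hlp
  -- Step 2: since a ≡ 0, h3 forces λ = 0, contradiction.
  have ha0 : a = fun _ => (0 : ℝ) := funext key
  have hda : fderiv ℝ a (0, 0) = 0 := by rw [ha0]; exact fderiv_const_apply 0
  have h := h3 (0, 0)
  have hk : fderiv ℝ lam (0, 0) (1, 0) / lam (0, 0) = 0 := key (0, 0)
  rw [hda, hk] at h
  simp only [ContinuousLinearMap.zero_apply, mul_zero, zero_pow, ne_eq,
    OfNat.ofNat_ne_zero, not_false_eq_true, mul_zero] at h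
  have hlp : lam (0, 0) ^ 2 ≠ 0 := pow_ne_zero 2 (hne (0, 0))
  have : lam (0, 0) ^ 2 = 0 := by
    rcases hε with h' | h' <;> rw [h'] at h <;> linarith
  exact hlp this
end
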